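/- Let k be a field, n ≥ 3, and t = 2m even with m ≥ 1. Set g_0 = ∏_{i=1}^n x_i^m, and for 1 ≤ k ≤ m and 1 ≤ j ≤ n set g_{k,j} = x_j^{m-k} ∏_{i≠j} x_i^{m+k} in k[x_1,…,x_n]. Order the generators as g_0 first, followed by the g_{k,j} with the pairs (k,j) in lexicographic order. Then for every generator g in this list other than g_0, the colon ideal generated by all earlier generators in the list, coloned with g, is generated by a subset of the variables {x_1,…,x_n}. -/

import Mathlib

open MvPolynomial

/-!
All generators are monomials, and for a monomial ideal `I` and a monomial `x^d` the colon
`I : x^d` consists of the polynomials whose every monomial `x^e` has `x^(e+d)` divisible by a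
generator. The exponent of `x_j` in every earlier generator exceeds its exponent `m - c` in
`g_{c,j}`, so every such `x^e` is divisible by `x_j`; conversely `x_j g_{c,j}` is divisible by
`g_{c-1,j}` (by `g_0` when `c = 1`). Hence the colon ideal is `(x_j)`.
-/

namespace MvPolynomial

variable {σ R : Type*} [CommSemiring R]

theorem support_mul_monomial_one (f : MvPolynomial σ R) (d : σ →₀ ℕ) :
    (f * monomial d 1).support = f.support.map (addRightEmbedding d) := by
  rw [← single_eq_monomial]
  exact AddMonoidAlgebra.support_coeff_mul_single f 1 (fun y => by simp) d

theorem colon_span_monomial_eq_span_X {A : Set (σ →₀ ℕ)} {d : σ →₀ ℕ} {S : Set σ}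
    (hS : ∀ i ∈ S, ∃ a ∈ A, a ≤ d + Finsupp.single i 1) (hA : ∀ a ∈ A, ∃ i ∈ S, d i < a i) :
    (Ideal.span ((fun s => monomial s (1 : R)) '' A)).colon
        (Ideal.span {monomial d (1 : R)} : Set (MvPolynomial σ R)) =
      Ideal.span (X '' S) := by
  ext f
  simp only [Ideal.mem_colon_span_singleton, mem_ideal_span_monomial_image,
    mem_ideal_span_X_image, support_mul_monomial_one, Finset.mem_map, addRightEmbedding_apply,
    forall_exists_index, and_imp, forall_apply_eq_imp_iff₂]
  constructor
  · intro H e he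
    obtain ⟨a, ha, hae⟩ := H e he
    obtain ⟨i, hi, hdi⟩ := hA a ha
    have hai := hae i
    rw [Finsupp.add_apply] at hai
    exact ⟨i, hi, by omega⟩
  · intro H e he
    obtain ⟨i, hi, hei⟩ := H e he
    obtain ⟨a, ha, had⟩ := hS i hi
    refine ⟨a, ha, had.trans ?_⟩
    rw [add_comm]
    gcongr
    simpa [Nat.one_le_iff_ne_zero] using hei

theorem prod_X_pow_eq_monomial_equivFunOnFinite [Fintype σ] (e : σ → ℕ) :
    ∏ i, (X i : MvPolynomial σ R) ^ e i = monomial (Finsupp.equivFunOnFinite.symm e) 1 := by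
  rw [prod_X_pow]
  congr
  ext i
  simp [Finsupp.indicator]

theorem X_pow_mul_prod_erase_X_pow [Fintype σ] [DecidableEq σ] (j : σ) (a b : ℕ) :
    (X j : MvPolynomial σ R) ^ a * ∏ i ∈ Finset.univ.erase j, X i ^ b =
      monomial (Finsupp.equivFunOnFinite.symm fun i => if i = j then a else b) 1 := by
  rw [← prod_X_pow_eq_monomial_equivFunOnFinite, ← Finset.mul_prod_erase _ _ (Finset.mem_univ j),
    if_pos rfl]
  congr 1
  exact Finset.prod_congr rfl fun i hi => by simp only [if_neg (Finset.ne_of_mem_erase hi)]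

end MvPolynomial

namespace CompleteGraphEven

variable {n : ℕ}

/-- The exponent vector of `g_{c,j} = x_j^(m-c) ∏_{i ≠ j} x_i^(m+c)`. -/
noncomputable def genExponent (m c : ℕ) (j : Fin n) : Fin n →₀ ℕ :=
  Finsupp.equivFunOnFinite.symm fun i => if i = j then m - c else m + c

theorem genExponent_apply (m c : ℕ) (j i : Fin n) :
    genExponent m c j i = if i = j then m - c else m + c :=
  rfl

/-- The exponent vectors of `g_0` and of the `g_{c',j'}` preceding `g_{c,j}`. -/
noncomputable def earlierExponents (m c : ℕ) (j : Fin n) : Set (Fin n →₀ ℕ) :=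
  insert (Finsupp.equivFunOnFinite.symm fun _ => m)
    {s | ∃ (c' : ℕ) (j' : Fin n), 1 ≤ c' ∧ c' ≤ m ∧ (c' < c ∨ (c' = c ∧ j' < j)) ∧
      s = genExponent m c' j'}

theorem earlier_generators_eq_monomial_image (R : Type*) [CommSemiring R] (m c : ℕ) (j : Fin n) :
    ({∏ i, X i ^ m} ∪
      {g : MvPolynomial (Fin n) R |
        ∃ (c' : ℕ) (j' : Fin n), 1 ≤ c' ∧ c' ≤ m ∧ (c' < c ∨ (c' = c ∧ j' < j)) ∧
          g = X j' ^ (m - c') * ∏ i ∈ Finset.univ.erase j', X i ^ (m + c')}) =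
      (fun s => monomial s (1 : R)) '' earlierExponents m c j := by
  rw [earlierExponents, Set.image_insert_eq, ← prod_X_pow_eq_monomial_equivFunOnFinite,
    Set.singleton_union]
  congr 1
  ext g
  simp only [Set.mem_ofPred_eq, Set.mem_image, X_pow_mul_prod_erase_X_pow]
  constructor
  · rintro ⟨c', j', h1, h2, hlex, rfl⟩
    exact ⟨_, ⟨c', j', h1, h2, hlex, rfl⟩, rfl⟩
  · rintro ⟨s, ⟨c', j', h1, h2, hlex, rfl⟩, rfl⟩
    exact ⟨c', j', h1, h2, hlex, rfl⟩

theorem genExponent_self_lt_of_mem_earlierExponents {m c : ℕ} {j : Fin n} (hc1 : 1 ≤ c)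
    (hc2 : c ≤ m) {a : Fin n →₀ ℕ} (ha : a ∈ earlierExponents m c j) :
    genExponent m c j j < a j := by
  rw [genExponent_apply, if_pos rfl]
  rcases ha with rfl | ⟨c', j', -, -, hlex, rfl⟩
  · rw [Finsupp.equivFunOnFinite_symm_apply_apply]
    omega
  · rw [genExponent_apply]
    split_ifs with hj
    · subst hj
      simp only [lt_self_iff_false, and_false, or_false] at hlex
      omega
    · omega

theorem exists_earlierExponents_le_add_single {m c : ℕ} (hc1 : 1 ≤ c) (hc2 : c ≤ m)
    (j : Fin n) : ∃ a ∈ earlierExponents m c j, a ≤ genExponent m c j + Finsupp.single j 1 := by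
  obtain rfl | hc := eq_or_lt_of_le hc1
  · refine ⟨_, Set.mem_insert _ _, Finsupp.le_def.2 fun i => ?_⟩
    simp only [Finsupp.equivFunOnFinite_symm_apply_apply, Finsupp.add_apply, genExponent_apply,
      Finsupp.single_apply]
    split_ifs <;> omega
  · refine ⟨genExponent m (c - 1) j,
      Or.inr ⟨c - 1, j, by omega, by omega, Or.inl (by omega), rfl⟩, Finsupp.le_def.2 fun i => ?_⟩
    simp only [Finsupp.add_apply, genExponent_apply, Finsupp.single_apply]
    split_ifs <;> omega

end CompleteGraphEven

theorem complete_graph_even_linear_quotients_colon_general (k : Type*) [Field k] (n m : ℕ)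
    (c : ℕ) (j : Fin n) (hc1 : 1 ≤ c) (hc2 : c ≤ m) :
    ∃ S : Set (Fin n),
      Submodule.colon
          (Ideal.span ({∏ i, X i ^ m} ∪
            {g : MvPolynomial (Fin n) k |
              ∃ (c' : ℕ) (j' : Fin n), 1 ≤ c' ∧ c' ≤ m ∧ (c' < c ∨ (c' = c ∧ j' < j)) ∧
                g = X j' ^ (m - c') * ∏ i ∈ Finset.univ.erase j', X i ^ (m + c')}))
          ((Ideal.span {X j ^ (m - c) * ∏ i ∈ Finset.univ.erase j, X i ^ (m + c)} : Ideal (MvPolynomial (Fin n) k)) : Set (MvPolynomial (Fin n) k)) =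
      Ideal.span (X '' S) := by
  refine ⟨{j}, ?_⟩
  rw [CompleteGraphEven.earlier_generators_eq_monomial_image, X_pow_mul_prod_erase_X_pow]
  exact colon_span_monomial_eq_span_X (d := CompleteGraphEven.genExponent m c j)
    (by simpa using CompleteGraphEven.exists_earlierExponents_le_add_single hc1 hc2 j)
    fun a ha => ⟨j, rfl, CompleteGraphEven.genExponent_self_lt_of_mem_earlierExponents hc1 hc2 ha⟩

/-- For `n ≥ 3` and even `t = 2m` with `m ≥ 1`, order the generators as
`g_0 = ∏_i x_i^m` first, followed by `g_{k,j} = x_j^{m-k} ∏_{i≠j} x_i^{m+k}`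
(`1 ≤ k ≤ m`, `1 ≤ j ≤ n`) in lexicographic order of `(k,j)`. Then for every
generator `g_{k,j}` (i.e. every generator other than `g_0`), the ideal of all
earlier generators coloned with `g_{k,j}` is generated by a subset of the variables. -/
theorem complete_graph_even_linear_quotients_colon (k : Type*) [Field k] (n m : ℕ)
    (hn : 3 ≤ n) (hm : 1 ≤ m) (c : ℕ) (j : Fin n) (hc1 : 1 ≤ c) (hc2 : c ≤ m) :
    ∃ S : Set (Fin n),
      Submodule.colon
          (Ideal.span ({∏ i, X i ^ m} ∪
            {g : MvPolynomial (Fin n) k |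
              ∃ (c' : ℕ) (j' : Fin n), 1 ≤ c' ∧ c' ≤ m ∧ (c' < c ∨ (c' = c ∧ j' < j)) ∧
                g = X j' ^ (m - c') * ∏ i ∈ Finset.univ.erase j', X i ^ (m + c')}))
          ((Ideal.span {X j ^ (m - c) * ∏ i ∈ Finset.univ.erase j, X i ^ (m + c)} : Ideal (MvPolynomial (Fin n) k)) : Set (MvPolynomial (Fin n) k)) =
      Ideal.span (X '' S) :=
  complete_graph_even_linear_quotients_colon_general k n m c j hc1 hc2
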